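/- arXiv:2201.00835 — 2 statements merged into one kernel-verified Lean document; each statement's English description precedes it below -/
import Mathlib

section
/- Direct-sum inequality for the Petz Rényi relative entropy: for every α > 1 and classical–quantum operators κ = ∑_x p(x)|x⟩⟨x|⊗κ_x (a state) and λ = ∑_x q(x)|x⟩⟨x|⊗λ_x (positive semidefinite), one has D_α(κ‖λ) ≥ D(p‖q) + ∑_x p(x) D_α(κ_x‖λ_x). -/
open scoped Matrix Classical ComplexOrder

namespace RainsPaper

/-- Natural matrix logarithm of a Hermitian matrix via spectral decomposition
(with the convention `log 0 = 0` on the kernel); junk value `0` otherwise. -/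
noncomputable def matLog {n : Type} [Fintype n] [DecidableEq n] (A : Matrix n n ℂ) :
    Matrix n n ℂ :=
  if hA : A.IsHermitian then
    (hA.eigenvectorUnitary : Matrix n n ℂ) *
      (Matrix.diagonal fun i => (Real.log (hA.eigenvalues i) : ℂ)) *
      (star (hA.eigenvectorUnitary : Matrix n n ℂ))
  else 0

/-- Real power of a Hermitian matrix via spectral decomposition (with the convention
`0 ^ r = 0` for `r ≠ 0`, so negative powers are taken on the support);
junk value `0` otherwise. -/
noncomputable def matPow {n : Type} [Fintype n] [DecidableEq n] (A : Matrix n n ℂ) (r : ℝ) :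
    Matrix n n ℂ :=
  if hA : A.IsHermitian then
    (hA.eigenvectorUnitary : Matrix n n ℂ) *
      (Matrix.diagonal fun i => ((hA.eigenvalues i ^ r : ℝ) : ℂ)) *
      (star (hA.eigenvectorUnitary : Matrix n n ℂ))
  else 0

/-- A state is a positive semidefinite operator with unit trace. -/
def IsState {n : Type} [Fintype n] (ρ : Matrix n n ℂ) : Prop :=
  ρ.PosSemidef ∧ ρ.trace = 1

/-- `supp ω ⊆ supp τ`, expressed (for Hermitian matrices) as `ker τ ⊆ ker ω`. -/
def SuppSubset {n : Type} [Fintype n] (ω τ : Matrix n n ℂ) : Prop :=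
  ∀ v : n → ℂ, τ.mulVec v = 0 → ω.mulVec v = 0

/-- Trace norm `‖X‖₁ = Tr √(X†X)`. -/
noncomputable def traceNorm {n : Type} [Fintype n] [DecidableEq n] (X : Matrix n n ℂ) : ℝ :=
  ((matPow (Xᴴ * X) 2⁻¹).trace).re

/-- Fidelity `F(ω,τ) = ‖√ω √τ‖₁²`. -/
noncomputable def fidelity {n : Type} [Fintype n] [DecidableEq n] (ω τ : Matrix n n ℂ) : ℝ :=
  (traceNorm (matPow ω 2⁻¹ * matPow τ 2⁻¹)) ^ 2

/-- Extended base-2 logarithm: `elog2 x = log₂ x` for `x > 0` and `-∞` for `x ≤ 0`. -/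
noncomputable def elog2 (x : ℝ) : EReal :=
  if x ≤ 0 then ⊥ else ((Real.logb 2 x : ℝ) : EReal)

/-- Quantum relative entropy `D(ω‖τ) = Tr[ω (log₂ ω - log₂ τ)]` if `supp ω ⊆ supp τ`,
and `+∞` otherwise. -/
noncomputable def qRelEnt {n : Type} [Fintype n] [DecidableEq n] (ω τ : Matrix n n ℂ) : EReal :=
  if SuppSubset ω τ then
    ((((ω * (matLog ω - matLog τ)).trace).re / Real.log 2 : ℝ) : EReal)
  else ⊤

/-- Sandwiched Rényi relative entropy
`D̃_α(ω‖τ) = (α-1)⁻¹ log₂ Tr[(τ^{(1-α)/(2α)} ω τ^{(1-α)/(2α)})^α]` when `α ∈ (0,1)`, or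
`α > 1` and `supp ω ⊆ supp τ`; `+∞` otherwise. -/
noncomputable def sandRenyi {n : Type} [Fintype n] [DecidableEq n] (α : ℝ)
    (ω τ : Matrix n n ℂ) : EReal :=
  if (0 < α ∧ α < 1) ∨ (1 < α ∧ SuppSubset ω τ) then
    (((α - 1)⁻¹ : ℝ) : EReal) *
      elog2 (((matPow (matPow τ ((1 - α) / (2 * α)) * ω * matPow τ ((1 - α) / (2 * α))) α).trace).re)
  else ⊤

/-- Petz Rényi relative entropy `D_α(ω‖τ) = (α-1)⁻¹ log₂ Tr[ω^α τ^{1-α}]` when `α ∈ (0,1)`,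
or `α > 1` and `supp ω ⊆ supp τ`; `+∞` otherwise. -/
noncomputable def petzRenyi {n : Type} [Fintype n] [DecidableEq n] (α : ℝ)
    (ω τ : Matrix n n ℂ) : EReal :=
  if (0 < α ∧ α < 1) ∨ (1 < α ∧ SuppSubset ω τ) then
    (((α - 1)⁻¹ : ℝ) : EReal) * elog2 (((matPow ω α * matPow τ (1 - α)).trace).re)
  else ⊤

/-- Geometric Rényi relative entropy `D̂_α(ω‖τ) = (α-1)⁻¹ log₂ Tr[τ (τ^{-1/2} ω τ^{-1/2})^α]`
(inverses on the support) when `α ∈ (0,1)`, or `α > 1` and `supp ω ⊆ supp τ`; `+∞` otherwise. -/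
noncomputable def geomRenyi {n : Type} [Fintype n] [DecidableEq n] (α : ℝ)
    (ω τ : Matrix n n ℂ) : EReal :=
  if (0 < α ∧ α < 1) ∨ (1 < α ∧ SuppSubset ω τ) then
    (((α - 1)⁻¹ : ℝ) : EReal) *
      elog2 (((τ * matPow (matPow τ (-2⁻¹) * ω * matPow τ (-2⁻¹)) α).trace).re)
  else ⊤

/-- Classical relative entropy `D(p‖q)`, equal to `+∞` unless `supp p ⊆ supp q`
(terms with `p x = 0` contribute zero). -/
noncomputable def cRelEnt {X : Type} [Fintype X] (p q : X → ℝ) : EReal :=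
  if ∀ x, p x ≠ 0 → q x ≠ 0 then
    ((∑ x, p x * Real.logb 2 (p x / q x) : ℝ) : EReal)
  else ⊤

/-- `p` is a probability distribution on the finite set `X`. -/
def IsProb {X : Type} [Fintype X] (p : X → ℝ) : Prop :=
  (∀ x, 0 ≤ p x) ∧ ∑ x, p x = 1

/-- The classical–quantum operator `∑ x p(x) |x⟩⟨x| ⊗ K x`. -/
noncomputable def cqOp {X A : Type} [DecidableEq X] (p : X → ℝ)
    (K : X → Matrix A A ℂ) : Matrix (X × A) (X × A) ℂ :=
  Matrix.of fun a b => if a.1 = b.1 then (p a.1 : ℂ) * K a.1 a.2 b.2 else 0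

/-- Partial transpose (on the second tensor factor):
`(id ⊗ T)(X)_{(i,k),(j,l)} = X_{(i,l),(j,k)}`. -/
def ptrans {a b : Type} (X : Matrix (a × b) (a × b) ℂ) : Matrix (a × b) (a × b) ℂ :=
  Matrix.of fun p q => X (p.1, q.2) (q.1, p.2)

/-- The partial transpose as a linear map. -/
def ptransL {a b : Type} : Matrix (a × b) (a × b) ℂ →ₗ[ℂ] Matrix (a × b) (a × b) ℂ where
  toFun := ptrans
  map_add' _ _ := rfl
  map_smul' _ _ := rfl

/-- `PPT'` : positive semidefinite bipartite operators whose partial transpose has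
trace norm at most 1. -/
def PPTprime {a b : Type} [Fintype a] [Fintype b] [DecidableEq a] [DecidableEq b]
    (σ : Matrix (a × b) (a × b) ℂ) : Prop :=
  σ.PosSemidef ∧ traceNorm (ptrans σ) ≤ 1

/-- The Rains relative entropy `R(ρ) = inf_{σ ∈ PPT'} D(ρ‖σ)`. -/
noncomputable def Rains {a b : Type} [Fintype a] [Fintype b] [DecidableEq a] [DecidableEq b]
    (ρ : Matrix (a × b) (a × b) ℂ) : EReal :=
  ⨅ σ : {σ : Matrix (a × b) (a × b) ℂ // PPTprime σ}, qRelEnt ρ σ.1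

/-- The sandwiched Rényi Rains relative entropy `R̃_α(ρ) = inf_{σ ∈ PPT'} D̃_α(ρ‖σ)`. -/
noncomputable def sandRains {a b : Type} [Fintype a] [Fintype b] [DecidableEq a] [DecidableEq b]
    (α : ℝ) (ρ : Matrix (a × b) (a × b) ℂ) : EReal :=
  ⨅ σ : {σ : Matrix (a × b) (a × b) ℂ // PPTprime σ}, sandRenyi α ρ σ.1

/-- The extension `id_{Fin k} ⊗ Φ` of a linear map on matrices. -/
def matExt {n m : Type} [Fintype n] [Fintype m]
    (Φ : Matrix n n ℂ →ₗ[ℂ] Matrix m m ℂ) (k : ℕ)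
    (X : Matrix (Fin k × n) (Fin k × n) ℂ) : Matrix (Fin k × m) (Fin k × m) ℂ :=
  Matrix.of fun p q => Φ (Matrix.of fun i j => X (p.1, i) (q.1, j)) p.2 q.2

/-- Complete positivity: all extensions `id_k ⊗ Φ` preserve positive semidefiniteness. -/
def IsCP {n m : Type} [Fintype n] [Fintype m]
    (Φ : Matrix n n ℂ →ₗ[ℂ] Matrix m m ℂ) : Prop :=
  ∀ (k : ℕ) (X : Matrix (Fin k × n) (Fin k × n) ℂ), X.PosSemidef → (matExt Φ k X).PosSemidef

/-- Trace preservation. -/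
def IsTP {n m : Type} [Fintype n] [Fintype m]
    (Φ : Matrix n n ℂ →ₗ[ℂ] Matrix m m ℂ) : Prop :=
  ∀ X : Matrix n n ℂ, (Φ X).trace = X.trace

/-- A selective PPT operation: a family of completely positive maps `P x` such that
`(id ⊗ T) ∘ P x ∘ (id ⊗ T)` is completely positive for every `x` and `∑ x, P x` is
trace preserving. -/
def IsSelectivePPT {a b a' b' X : Type} [Fintype a] [Fintype b] [Fintype a'] [Fintype b']
    [Fintype X]
    (P : X → (Matrix (a × b) (a × b) ℂ →ₗ[ℂ] Matrix (a' × b') (a' × b') ℂ)) : Prop :=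
  (∀ x, IsCP (P x)) ∧ (∀ x, IsCP (ptransL ∘ₗ P x ∘ₗ ptransL)) ∧
    (∀ ρ : Matrix (a × b) (a × b) ℂ, ∑ x, ((P x) ρ).trace = ρ.trace)

/-- The maximally entangled state `Φ^d = |Φ^d⟩⟨Φ^d|`, `|Φ^d⟩ = d^{-1/2} ∑ i |i⟩|i⟩`. -/
noncomputable def maxEnt (d : ℕ) : Matrix (Fin d × Fin d) (Fin d × Fin d) ℂ :=
  Matrix.of fun p q => if p.1 = p.2 ∧ q.1 = q.2 then ((d : ℂ))⁻¹ else 0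

/-- Binary entropy `h₂(ε) = -ε log₂ ε - (1-ε) log₂ (1-ε)`. -/
noncomputable def h2 (ε : ℝ) : ℝ :=
  -ε * Real.logb 2 ε - (1 - ε) * Real.logb 2 (1 - ε)



/-!
Both operators are block diagonal over the classical register and the spectral calculus acts
blockwise, so `Tr[κ^α λ^{1-α}] = ∑ₓ p(x)^α q(x)^{1-α} tₓ` with `tₓ = Tr[κₓ^α λₓ^{1-α}]`.
Writing the summand as `p(x) aₓ` with `aₓ = (p(x)/q(x))^{α-1} tₓ`, the inequality is Jensen's
inequality for the concave logarithm, scaled by `(α - 1)⁻¹ > 0`. The support condition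
`supp κ ⊆ supp λ` gives `q(x) > 0` and `supp κₓ ⊆ supp λₓ` whenever `p(x) > 0`, which makes those
`tₓ` positive; without it the left-hand side is `+∞`.
-/

open Matrix

section spectral

variable {n : Type} [Fintype n] [DecidableEq n]

lemma matPow_of_isHermitian {A : Matrix n n ℂ} (hA : A.IsHermitian) (r : ℝ) :
    matPow A r = (hA.eigenvectorUnitary : Matrix n n ℂ) *
      diagonal (fun i => ((hA.eigenvalues i ^ r : ℝ) : ℂ)) *
      star (hA.eigenvectorUnitary : Matrix n n ℂ) :=
  dif_pos hA

lemma eigenvectorUnitary_conj_diagonal_eigenvalues {A : Matrix n n ℂ} (hA : A.IsHermitian) :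
    (hA.eigenvectorUnitary : Matrix n n ℂ) * diagonal (fun i => (hA.eigenvalues i : ℂ)) *
      star (hA.eigenvectorUnitary : Matrix n n ℂ) = A := by
  conv_rhs => rw [hA.spectral_theorem]
  rfl

/-- Functional calculus through a unitary diagonalization does not depend on the
diagonalization chosen. -/
lemma unitary_conj_diagonal_comp_eq {U V : Matrix n n ℂ} (hU : U ∈ unitaryGroup n ℂ)
    (hV : V ∈ unitaryGroup n ℂ) {d e : n → ℂ}
    (h : U * diagonal d * star U = V * diagonal e * star V) (f : ℂ → ℂ) :
    U * diagonal (f ∘ d) * star U = V * diagonal (f ∘ e) * star V := by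
  obtain ⟨hU₁, hU₂⟩ := Unitary.mem_iff.mp hU
  obtain ⟨hV₁, hV₂⟩ := Unitary.mem_iff.mp hV
  set W := star V * U
  -- `W` intertwines `diagonal d` and `diagonal e`, so `W i j ≠ 0` forces `d j = e i`.
  have hWd : W * diagonal d = diagonal e * W := by
    calc W * diagonal d = star V * (U * diagonal d * star U) * U := by
          simp only [W, Matrix.mul_assoc, hU₁, Matrix.mul_one]
      _ = diagonal e * W := by
          rw [h]; simp only [W, ← Matrix.mul_assoc, hV₁, Matrix.one_mul]
  have hWf : W * diagonal (f ∘ d) = diagonal (f ∘ e) * W := by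
    ext i j
    have hij := congr_fun₂ hWd i j
    simp only [mul_diagonal, diagonal_mul, Function.comp_apply] at hij ⊢
    by_cases hw : W i j = 0
    · simp [hw]
    · rw [mul_comm (e i), mul_right_inj' hw] at hij
      rw [hij, mul_comm]
  calc U * diagonal (f ∘ d) * star U = V * (W * diagonal (f ∘ d)) * star U := by
        simp only [W, ← Matrix.mul_assoc, hV₂, Matrix.one_mul]
    _ = V * diagonal (f ∘ e) * star V := by
        rw [hWf]; simp only [W, Matrix.mul_assoc, hU₂, Matrix.mul_one]

lemma matPow_eq_of_eq_unitary_conj_diagonal {A U : Matrix n n ℂ} (hU : U ∈ unitaryGroup n ℂ)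
    {d : n → ℝ} (hA : A = U * diagonal (fun i => (d i : ℂ)) * star U) (r : ℝ) :
    matPow A r = U * diagonal (fun i => ((d i ^ r : ℝ) : ℂ)) * star U := by
  have hAh : A.IsHermitian := by
    rw [hA, star_eq_conjTranspose]
    refine isHermitian_mul_mul_conjTranspose _ (isHermitian_diagonal_of_self_adjoint _ ?_)
    exact funext fun i => Complex.conj_ofReal (d i)
  rw [matPow_of_isHermitian hAh]
  simpa [Function.comp_def] using (unitary_conj_diagonal_comp_eq hU hAh.eigenvectorUnitary.2
    (hA.symm.trans (eigenvectorUnitary_conj_diagonal_eigenvalues hAh).symm)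
    (fun z => ((z.re ^ r : ℝ) : ℂ))).symm

end spectral

section trace

variable {n : Type} [Fintype n] [DecidableEq n]

lemma trace_unitary_conj_diagonal_mul (U V : Matrix n n ℂ) (d e : n → ℝ) :
    (U * diagonal (fun i => (d i : ℂ)) * star U *
        (V * diagonal (fun i => (e i : ℂ)) * star V)).trace =
      ((∑ i, ∑ j, d i * e j * Complex.normSq ((star V * U) j i) : ℝ) : ℂ) := by
  set D := diagonal (fun i => (d i : ℂ))
  set W := star V * U
  calc (U * D * star U * (V * diagonal (fun i => (e i : ℂ)) * star V)).trace
      = (D * (star W * (diagonal (fun i => (e i : ℂ)) * W))).trace := by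
        rw [show U * D * star U * (V * diagonal (fun i => (e i : ℂ)) * star V) =
          U * (D * star U * V * diagonal (fun i => (e i : ℂ)) * star V) by
            simp only [Matrix.mul_assoc], trace_mul_comm]
        simp only [W, star_mul, star_star, Matrix.mul_assoc]
    _ = _ := by
        simp only [D, trace, diag, diagonal_mul]
        simp only [mul_apply, star_apply, diagonal_apply, ite_mul, zero_mul,
          Finset.sum_ite_eq, Finset.mem_univ, if_true, Finset.mul_sum]
        push_cast
        refine Finset.sum_congr rfl fun i _ => Finset.sum_congr rfl fun j _ => ?_
        rw [Complex.normSq_eq_conj_mul_self]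
        simp only [RCLike.star_def]
        ring

lemma trace_matPow_mul_matPow {B C : Matrix n n ℂ} (hB : B.IsHermitian) (hC : C.IsHermitian)
    (r s : ℝ) :
    (matPow B r * matPow C s).trace = ((∑ i, ∑ j, hB.eigenvalues i ^ r * hC.eigenvalues j ^ s *
      Complex.normSq ((star (hC.eigenvectorUnitary : Matrix n n ℂ) *
        (hB.eigenvectorUnitary : Matrix n n ℂ)) j i) : ℝ) : ℂ) := by
  rw [matPow_of_isHermitian hB, matPow_of_isHermitian hC, trace_unitary_conj_diagonal_mul]

/-- An eigenvector of `B` with positive eigenvalue lies in the support of `C`, so it overlaps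
some eigenvector of `C` with positive eigenvalue. -/
lemma exists_eigenvalues_pos_overlap_ne_zero {B C : Matrix n n ℂ} (hB : B.PosSemidef)
    (hB₀ : B ≠ 0) (hC : C.PosSemidef) (hBC : SuppSubset B C) :
    ∃ i j, 0 < hB.1.eigenvalues i ∧ 0 < hC.1.eigenvalues j ∧
      (star (hC.1.eigenvectorUnitary : Matrix n n ℂ) * (hB.1.eigenvectorUnitary : Matrix n n ℂ)) j i
        ≠ 0 := by
  obtain ⟨i, hi⟩ := Function.ne_iff.mp (mt hB.1.eigenvalues_eq_zero_iff.mp hB₀)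
  have hbi : 0 < hB.1.eigenvalues i := (hB.eigenvalues_nonneg i).lt_of_ne' hi
  set u : n → ℂ := ⇑(hB.1.eigenvectorBasis i)
  have hBu : B *ᵥ u ≠ 0 := by
    rw [hB.1.mulVec_eigenvectorBasis]
    exact smul_ne_zero hi
      ((WithLp.ofLp_eq_zero 2).ne.2 (hB.1.eigenvectorBasis.orthonormal.ne_zero i))
  have hCu : C *ᵥ u ≠ 0 := mt (hBC u) hBu
  refine ⟨i, ?_⟩
  by_contra! h
  apply hCu
  have hW : ∀ j, (star (hC.1.eigenvectorUnitary : Matrix n n ℂ) *ᵥ u) j =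
      (star (hC.1.eigenvectorUnitary : Matrix n n ℂ) *
        (hB.1.eigenvectorUnitary : Matrix n n ℂ)) j i :=
    fun j => rfl
  suffices hdiag : diagonal (fun j => (hC.1.eigenvalues j : ℂ)) *ᵥ
      (star (hC.1.eigenvectorUnitary : Matrix n n ℂ) *ᵥ u) = 0 by
    rw [← eigenvectorUnitary_conj_diagonal_eigenvalues hC.1, ← mulVec_mulVec, ← mulVec_mulVec,
      hdiag, mulVec_zero]
  ext j
  rw [mulVec_diagonal, hW, Pi.zero_apply]
  rcases (hC.eigenvalues_nonneg j).lt_or_eq with hj | hj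
  · rw [h j hbi hj, mul_zero]
  · rw [← hj, Complex.ofReal_zero, zero_mul]

lemma re_trace_matPow_mul_matPow_pos {B C : Matrix n n ℂ} (hB : B.PosSemidef) (hB₀ : B ≠ 0)
    (hC : C.PosSemidef) (hBC : SuppSubset B C) (r s : ℝ) :
    0 < (matPow B r * matPow C s).trace.re := by
  obtain ⟨i, j, hbi, hcj, hW⟩ := exists_eigenvalues_pos_overlap_ne_zero hB hB₀ hC hBC
  rw [trace_matPow_mul_matPow hB.1 hC.1, Complex.ofReal_re]
  have hterm : ∀ i j, 0 ≤ hB.1.eigenvalues i ^ r * hC.1.eigenvalues j ^ s *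
      Complex.normSq ((star (hC.1.eigenvectorUnitary : Matrix n n ℂ) *
        (hB.1.eigenvectorUnitary : Matrix n n ℂ)) j i) := fun i j =>
    mul_nonneg (mul_nonneg (Real.rpow_nonneg (hB.eigenvalues_nonneg i) r)
      (Real.rpow_nonneg (hC.eigenvalues_nonneg j) s)) (Complex.normSq_nonneg _)
  refine Finset.sum_pos' (fun i _ => Finset.sum_nonneg fun j _ => hterm i j)
    ⟨i, Finset.mem_univ i, Finset.sum_pos' (fun j _ => hterm i j) ⟨j, Finset.mem_univ j, ?_⟩⟩
  exact mul_pos (mul_pos (Real.rpow_pos_of_pos hbi r) (Real.rpow_pos_of_pos hcj s))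
    (Complex.normSq_pos.mpr hW)

end trace

section cq

variable {X A : Type} [DecidableEq X]

lemma cqOp_mul [Fintype X] [Fintype A] (p q : X → ℝ) (K L : X → Matrix A A ℂ) :
    cqOp p K * cqOp q L = cqOp (p * q) (K * L) := by
  ext ⟨x, a⟩ ⟨y, b⟩
  simp only [cqOp, mul_apply, of_apply, Fintype.sum_prod_type, Pi.mul_apply, ite_mul, zero_mul,
    mul_ite, mul_zero]
  by_cases hxy : x = y
  · subst hxy
    simp only [Finset.sum_ite_irrel, Finset.sum_const_zero, Finset.sum_ite_eq', Finset.mem_univ,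
      if_true, Complex.ofReal_mul, Finset.mul_sum]
    refine Finset.sum_congr rfl fun _ _ => by ring
  · simp [hxy]

lemma star_cqOp (p : X → ℝ) (K : X → Matrix A A ℂ) :
    star (cqOp p K) = cqOp p (star K) := by
  ext ⟨x, a⟩ ⟨y, b⟩
  by_cases hxy : x = y
  · subst hxy; simp [cqOp, star_apply]
  · simp [cqOp, star_apply, hxy, Ne.symm hxy]

lemma cqOp_one [DecidableEq A] : cqOp (1 : X → ℝ) (1 : X → Matrix A A ℂ) = 1 := by
  ext ⟨x, a⟩ ⟨y, b⟩
  by_cases hxy : x = y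
  · subst hxy; simp [cqOp, one_apply]
  · simp [cqOp, one_apply, hxy]

lemma diagonal_eq_cqOp [DecidableEq A] (p : X → ℝ) (d : X → A → ℝ) :
    diagonal (fun i : X × A => ((p i.1 * d i.1 i.2 : ℝ) : ℂ)) =
      cqOp p (fun x => diagonal fun a => (d x a : ℂ)) := by
  ext ⟨x, a⟩ ⟨y, b⟩
  by_cases hxy : x = y
  · subst hxy; by_cases hab : a = b <;> simp [cqOp, diagonal_apply, hab]
  · simp [cqOp, diagonal_apply, hxy]

lemma trace_cqOp [Fintype X] [Fintype A] (p : X → ℝ) (K : X → Matrix A A ℂ) :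
    (cqOp p K).trace = ∑ x, (p x : ℂ) * (K x).trace := by
  simp [trace, cqOp, Fintype.sum_prod_type, Finset.mul_sum]

lemma cqOp_one_mem_unitaryGroup [Fintype X] [Fintype A] [DecidableEq A] {U : X → Matrix A A ℂ}
    (hU : ∀ x, U x ∈ unitaryGroup A ℂ) : cqOp 1 U ∈ unitaryGroup (X × A) ℂ := by
  rw [mem_unitaryGroup_iff, star_cqOp, cqOp_mul, ← cqOp_one]
  exact congr_arg₂ cqOp (one_mul 1) (funext fun x => mem_unitaryGroup_iff.mp (hU x))

lemma cqOp_one_mul_diagonal_mul_star [Fintype X] [Fintype A] [DecidableEq A]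
    (U : X → Matrix A A ℂ) (w : X → ℝ) (d : X → A → ℝ) :
    cqOp 1 U * diagonal (fun i : X × A => ((w i.1 * d i.1 i.2 : ℝ) : ℂ)) * star (cqOp 1 U) =
      cqOp w (fun x => U x * diagonal (fun a => (d x a : ℂ)) * star (U x)) := by
  rw [diagonal_eq_cqOp, star_cqOp, cqOp_mul, cqOp_mul]
  simp only [one_mul, mul_one]
  rfl

lemma matPow_cqOp [Fintype X] [Fintype A] [DecidableEq A] {p : X → ℝ} (hp : ∀ x, 0 ≤ p x)
    {K : X → Matrix A A ℂ} (hK : ∀ x, (K x).PosSemidef) (r : ℝ) :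
    matPow (cqOp p K) r = cqOp (fun x => p x ^ r) (fun x => matPow (K x) r) := by
  have hdiag := cqOp_one_mul_diagonal_mul_star (fun x => (hK x).1.eigenvectorUnitary) p
    (fun x => (hK x).1.eigenvalues)
  have hpow := cqOp_one_mul_diagonal_mul_star (fun x => (hK x).1.eigenvectorUnitary)
    (fun x => p x ^ r) (fun x a => (hK x).1.eigenvalues a ^ r)
  simp only [eigenvectorUnitary_conj_diagonal_eigenvalues] at hdiag
  simp only [← matPow_of_isHermitian] at hpow
  rw [matPow_eq_of_eq_unitary_conj_diagonal
    (cqOp_one_mem_unitaryGroup fun x => (hK x).1.eigenvectorUnitary.2) hdiag.symm]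
  rw [← hpow]
  simp only [Real.mul_rpow (hp _) ((hK _).eigenvalues_nonneg _)]

lemma re_trace_matPow_cqOp_mul_matPow_cqOp [Fintype X] [Fintype A] [DecidableEq A]
    {p q : X → ℝ} (hp : ∀ x, 0 ≤ p x) (hq : ∀ x, 0 ≤ q x) {K L : X → Matrix A A ℂ}
    (hK : ∀ x, (K x).PosSemidef) (hL : ∀ x, (L x).PosSemidef) (r s : ℝ) :
    (matPow (cqOp p K) r * matPow (cqOp q L) s).trace.re =
      ∑ x, p x ^ r * q x ^ s * (matPow (K x) r * matPow (L x) s).trace.re := by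
  rw [matPow_cqOp hp hK, matPow_cqOp hq hL, cqOp_mul, trace_cqOp, Complex.re_sum]
  simp

end cq

section support

variable {n : Type} [Fintype n]

lemma SuppSubset.of_smul {M N : Matrix n n ℂ} {a b : ℂ} (ha : a ≠ 0)
    (h : SuppSubset (a • M) (b • N)) : SuppSubset M N := by
  intro v hv
  have := h v (by rw [smul_mulVec, hv, smul_zero])
  rwa [smul_mulVec, smul_eq_zero, or_iff_right ha] at this

lemma SuppSubset.eq_zero_of_right_eq_zero {M : Matrix n n ℂ} (h : SuppSubset M 0) : M = 0 :=
  ext_iff_mulVec.mpr fun v => by rw [h v (zero_mulVec v), zero_mulVec]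

variable {X A : Type} [Fintype X] [DecidableEq X] [Fintype A]

lemma cqOp_mulVec_of_fst_eq (q : X → ℝ) (L : X → Matrix A A ℂ) (x : X) (w : A → ℂ) :
    cqOp q L *ᵥ (fun i => if i.1 = x then w i.2 else 0) =
      fun i => if i.1 = x then (((q x : ℂ) • L x) *ᵥ w) i.2 else 0 := by
  ext ⟨y, b⟩
  by_cases hy : y = x
  · subst hy
    simp [cqOp, mulVec, dotProduct, Fintype.sum_prod_type, mul_assoc]
  · simp [cqOp, mulVec, dotProduct, Fintype.sum_prod_type, hy]

lemma SuppSubset.smul_block_of_cqOp {p q : X → ℝ} {K L : X → Matrix A A ℂ}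
    (h : SuppSubset (cqOp p K) (cqOp q L)) (x : X) :
    SuppSubset ((p x : ℂ) • K x) ((q x : ℂ) • L x) := by
  intro w hw
  have hlift := h _ (by rw [cqOp_mulVec_of_fst_eq, hw]; ext; simp)
  rw [cqOp_mulVec_of_fst_eq] at hlift
  ext b
  simpa using congr_fun hlift (x, b)

lemma SuppSubset.block_of_cqOp {p q : X → ℝ} {K L : X → Matrix A A ℂ}
    (h : SuppSubset (cqOp p K) (cqOp q L)) (hq : ∀ x, 0 ≤ q x) {x : X} (hpx : p x ≠ 0)
    (hK : K x ≠ 0) : 0 < q x ∧ SuppSubset (K x) (L x) := by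
  have hx := h.smul_block_of_cqOp x
  have hpx' : (p x : ℂ) ≠ 0 := Complex.ofReal_ne_zero.mpr hpx
  refine ⟨(hq x).lt_of_ne' fun hqx => hK ?_, hx.of_smul hpx'⟩
  rw [hqx, Complex.ofReal_zero, zero_smul] at hx
  exact (smul_eq_zero.mp hx.eq_zero_of_right_eq_zero).resolve_left hpx'

end support

section probability

variable {X : Type} [Fintype X] {p : X → ℝ}

lemma IsProb.exists_ne_zero (hp : IsProb p) : ∃ x, p x ≠ 0 := by
  by_contra! h
  simpa [h] using hp.2

lemma IsProb.sum_mul_pos (hp : IsProb p) {a : X → ℝ} (ha : ∀ x, p x ≠ 0 → 0 < a x) :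
    0 < ∑ x, p x * a x := by
  have hnonneg : ∀ x, 0 ≤ p x * a x := fun x => by
    rcases eq_or_ne (p x) 0 with hx | hx
    · rw [hx, zero_mul]
    · exact mul_nonneg (hp.1 x) (ha x hx).le
  obtain ⟨x, hx⟩ := hp.exists_ne_zero
  exact Finset.sum_pos' (fun x _ => hnonneg x)
    ⟨x, Finset.mem_univ x, mul_pos ((hp.1 x).lt_of_ne' hx) (ha x hx)⟩

lemma IsProb.sum_mul_log_le_log_sum_mul (hp : IsProb p) {a : X → ℝ}
    (ha : ∀ x, p x ≠ 0 → 0 < a x) :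
    ∑ x, p x * Real.log (a x) ≤ Real.log (∑ x, p x * a x) := by
  classical
  have hsupp : ∀ f : X → ℝ, (∀ x, p x = 0 → f x = 0) →
      ∑ x with p x ≠ 0, f x = ∑ x, f x :=
    fun f hf => Finset.sum_filter_of_ne fun x _ => mt (hf x)
  rw [← hsupp _ fun x hx => by rw [hx, zero_mul], ← hsupp _ fun x hx => by rw [hx, zero_mul]]
  refine strictConcaveOn_log_Ioi.concaveOn.le_map_sum (fun x _ => hp.1 x) ?_
    fun x hx => ha x (Finset.mem_filter.mp hx).2
  rw [hsupp p fun _ => id, hp.2]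

lemma rpow_mul_rpow_one_sub_mul_eq {α : ℝ} (hα : α ≠ 0) {p q : ℝ} (hp : 0 ≤ p)
    (hq : p ≠ 0 → 0 < q) (t : ℝ) :
    p ^ α * q ^ (1 - α) * t = p * ((p / q) ^ (α - 1) * t) := by
  rcases hp.eq_or_lt with rfl | hp
  · rw [Real.zero_rpow hα, zero_mul, zero_mul, zero_mul]
  have hq := hq hp.ne'
  rw [Real.div_rpow hp.le hq.le, show 1 - α = -(α - 1) by ring, Real.rpow_neg hq.le,
    ← mul_assoc, ← mul_div_assoc, ← Real.rpow_one_add' hp.le (by simpa using hα)]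
  ring_nf

lemma IsProb.sum_rpow_mul_rpow_one_sub_mul_pos {α : ℝ} (hα : α ≠ 0) (hp : IsProb p)
    {q t : X → ℝ} (hq : ∀ x, p x ≠ 0 → 0 < q x) (ht : ∀ x, p x ≠ 0 → 0 < t x) :
    0 < ∑ x, p x ^ α * q x ^ (1 - α) * t x := by
  simp only [rpow_mul_rpow_one_sub_mul_eq hα (hp.1 _) (hq _)]
  exact hp.sum_mul_pos fun x hx =>
    mul_pos (Real.rpow_pos_of_pos (div_pos ((hp.1 x).lt_of_ne' hx) (hq x hx)) _) (ht x hx)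

lemma IsProb.relEnt_add_sum_le_logb_sum {α : ℝ} (hα : 1 < α) (hp : IsProb p) {q t : X → ℝ}
    (hq : ∀ x, p x ≠ 0 → 0 < q x) (ht : ∀ x, p x ≠ 0 → 0 < t x) :
    ∑ x, p x * Real.logb 2 (p x / q x) + ∑ x, p x * ((α - 1)⁻¹ * Real.logb 2 (t x)) ≤
      (α - 1)⁻¹ * Real.logb 2 (∑ x, p x ^ α * q x ^ (1 - α) * t x) := by
  have hc : 0 < α - 1 := sub_pos.mpr hα
  have hL : 0 < Real.log 2 := Real.log_pos one_lt_two
  set a : X → ℝ := fun x => (p x / q x) ^ (α - 1) * t x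
  have ha : ∀ x, p x ≠ 0 → 0 < a x := fun x hx =>
    mul_pos (Real.rpow_pos_of_pos (div_pos ((hp.1 x).lt_of_ne' hx) (hq x hx)) _) (ht x hx)
  have hloga : ∀ x, p x * Real.log (a x) =
      (α - 1) * (p x * Real.log (p x / q x)) + p x * Real.log (t x) := fun x => by
    rcases eq_or_ne (p x) 0 with hx | hx
    · simp [hx]
    have hpq := div_pos ((hp.1 x).lt_of_ne' hx) (hq x hx)
    rw [Real.log_mul (Real.rpow_pos_of_pos hpq _).ne' (ht x hx).ne', Real.log_rpow hpq]
    ring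
  have hsum : ∑ x, p x ^ α * q x ^ (1 - α) * t x = ∑ x, p x * a x :=
    Finset.sum_congr rfl fun x _ =>
      rpow_mul_rpow_one_sub_mul_eq (zero_lt_one.trans hα).ne' (hp.1 x) (hq x) (t x)
  calc ∑ x, p x * Real.logb 2 (p x / q x) + ∑ x, p x * ((α - 1)⁻¹ * Real.logb 2 (t x))
      = ((α - 1) * Real.log 2)⁻¹ * ∑ x, p x * Real.log (a x) := by
        simp only [hloga, Real.logb, Finset.mul_sum, ← Finset.sum_add_distrib]
        refine Finset.sum_congr rfl fun x _ => ?_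
        field_simp
    _ ≤ ((α - 1) * Real.log 2)⁻¹ * Real.log (∑ x, p x * a x) :=
        mul_le_mul_of_nonneg_left (hp.sum_mul_log_le_log_sum_mul ha) (by positivity)
    _ = _ := by
        rw [hsum, Real.logb]
        field_simp

end probability

lemma IsState.ne_zero {n : Type} [Fintype n] {ρ : Matrix n n ℂ} (hρ : IsState ρ) : ρ ≠ 0 := by
  rintro rfl
  simpa using hρ.2

lemma EReal.coe_finset_sum {X : Type} (s : Finset X) (f : X → ℝ) :
    ((∑ x ∈ s, f x : ℝ) : EReal) = ∑ x ∈ s, (f x : EReal) :=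
  map_sum (⟨⟨Real.toEReal, EReal.coe_zero⟩, EReal.coe_add⟩ : ℝ →+ EReal) f s

section petz

variable {n : Type} [Fintype n] [DecidableEq n] {α : ℝ} {ω τ : Matrix n n ℂ}

lemma petzRenyi_of_not_suppSubset (hα : 1 < α) (h : ¬SuppSubset ω τ) : petzRenyi α ω τ = ⊤ := by
  rw [petzRenyi, if_neg]
  rintro (⟨-, hα'⟩ | ⟨-, h'⟩)
  exacts [hα.not_gt hα', h h']

lemma petzRenyi_of_suppSubset (hα : 1 < α) (h : SuppSubset ω τ)
    (hpos : 0 < (matPow ω α * matPow τ (1 - α)).trace.re) :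
    petzRenyi α ω τ =
      (((α - 1)⁻¹ * Real.logb 2 (matPow ω α * matPow τ (1 - α)).trace.re : ℝ) : EReal) := by
  rw [petzRenyi, if_pos (Or.inr ⟨hα, h⟩), elog2, if_neg hpos.not_ge, EReal.coe_mul]

end petz

/-- Direct-sum inequality for the Petz Rényi relative entropy:
for every `α > 1` and classical–quantum `κ`, `λ`,
`D_α(κ‖λ) ≥ D(p‖q) + ∑ x p(x) D_α(κ_x‖λ_x)`. -/
theorem petzRenyi_directSum {X A : Type} [Fintype X] [DecidableEq X] [Fintype A] [DecidableEq A]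
    (α : ℝ) (hα : 1 < α)
    (p q : X → ℝ) (κ lam : X → Matrix A A ℂ)
    (hp : IsProb p) (hκ : ∀ x, IsState (κ x))
    (hq : ∀ x, 0 ≤ q x) (hlam : ∀ x, (lam x).PosSemidef) :
    petzRenyi α (cqOp p κ) (cqOp q lam) ≥
      cRelEnt p q + ∑ x, (p x : EReal) * petzRenyi α (κ x) (lam x) := by
  by_cases hsupp : SuppSubset (cqOp p κ) (cqOp q lam)
  swap
  · rw [petzRenyi_of_not_suppSubset hα hsupp]
    exact le_top
  have hblock : ∀ x, p x ≠ 0 → 0 < q x ∧ SuppSubset (κ x) (lam x) := fun x hx =>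
    hsupp.block_of_cqOp hq hx (hκ x).ne_zero
  set t : X → ℝ := fun x => (matPow (κ x) α * matPow (lam x) (1 - α)).trace.re
  have ht : ∀ x, p x ≠ 0 → 0 < t x := fun x hx =>
    re_trace_matPow_mul_matPow_pos (hκ x).1 (hκ x).ne_zero (hlam x) (hblock x hx).2 α (1 - α)
  have hT := re_trace_matPow_cqOp_mul_matPow_cqOp hp.1 hq (fun x => (hκ x).1) hlam α (1 - α)
  -- In `EReal`, `0 * ⊤ = 0`, so blocks outside the support of `p` contribute nothing.
  have hterm : ∀ x, (p x : EReal) * petzRenyi α (κ x) (lam x) =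
      ((p x * ((α - 1)⁻¹ * Real.logb 2 (t x)) : ℝ) : EReal) := fun x => by
    rcases eq_or_ne (p x) 0 with hx | hx
    · simp [hx]
    · rw [petzRenyi_of_suppSubset hα (hblock x hx).2 (ht x hx), ← EReal.coe_mul]
  have hTpos := hp.sum_rpow_mul_rpow_one_sub_mul_pos (zero_lt_one.trans hα).ne'
    (fun x hx => (hblock x hx).1) ht
  rw [petzRenyi_of_suppSubset hα hsupp (hT ▸ hTpos), hT, cRelEnt,
    if_pos fun x hx => (hblock x hx).1.ne', Finset.sum_congr rfl fun x _ => hterm x,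
    ← EReal.coe_finset_sum, ← EReal.coe_add, ge_iff_le, EReal.coe_le_coe_iff]
  exact hp.relEnt_add_sum_le_logb_sum hα (fun x hx => (hblock x hx).1) ht

end RainsPaper
end

section
/- Overlap bound for PPT' operators with the maximally entangled state: for every σ ∈ PPT'(H_Â⊗H_B̂) with dim H_Â = dim H_B̂ = d, one has Tr[Φ^d σ] ≤ 1/d. -/
open scoped Matrix Classical ComplexOrder

namespace RainsPaper

/-!
With `F` the swap operator, `Tr[Φ^d σ] = Tr[F σ^Γ] / d`. The swap is unitary, and for a unitary
`F` and a Hermitian `X` with eigenbasis `U`, `Re Tr[F X] = ∑ᵢ Re (U† F U)ᵢᵢ λᵢ ≤ ∑ᵢ |λᵢ| = ‖X‖₁`,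
because the entries of the unitary `U† F U` have modulus at most one. Hence
`Tr[Φ^d σ] ≤ ‖σ^Γ‖₁ / d ≤ 1 / d`.
-/

section Hermitian

variable {n : Type} [Fintype n] [DecidableEq n]

theorem matPow_eq_cfc {A : Matrix n n ℂ} (hA : A.IsHermitian) (r : ℝ) :
    matPow A r = cfc (fun x : ℝ => x ^ r) A := by
  rw [matPow, dif_pos hA, hA.cfc_eq, Matrix.IsHermitian.cfc, Unitary.conjStarAlgAut_apply]
  rfl

theorem trace_cfc_eq_sum_eigenvalues {A : Matrix n n ℂ} (hA : A.IsHermitian) (f : ℝ → ℝ) :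
    (cfc f A).trace = ∑ i, (f (hA.eigenvalues i) : ℂ) := by
  rw [hA.cfc_eq, Matrix.IsHermitian.cfc, Unitary.conjStarAlgAut_apply, Matrix.trace_mul_cycle,
    Unitary.coe_star_mul_self, one_mul, Matrix.trace_diagonal]
  rfl

theorem traceNorm_eq_sum_abs_eigenvalues {X : Matrix n n ℂ} (hX : X.IsHermitian) :
    traceNorm X = ∑ i, |hX.eigenvalues i| := by
  have hsq : Xᴴ * X = cfc (· ^ 2 : ℝ → ℝ) X := by
    rw [hX.eq, cfc_pow_id X 2, sq]
  have habs : matPow (Xᴴ * X) 2⁻¹ = cfc (fun x : ℝ => |x|) X := by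
    rw [matPow_eq_cfc (Matrix.isHermitian_conjTranspose_mul_self X), hsq,
      ← cfc_comp (· ^ (2⁻¹ : ℝ)) (· ^ 2) X]
    refine cfc_congr fun x _ => ?_
    simp only [Function.comp_apply]
    rw [← one_div, ← Real.sqrt_eq_rpow, Real.sqrt_sq_eq_abs]
  rw [traceNorm, habs, trace_cfc_eq_sum_eigenvalues hX, ← Complex.ofReal_sum, Complex.ofReal_re]

theorem re_trace_mul_le_traceNorm {F X : Matrix n n ℂ} (hF : F ∈ Matrix.unitaryGroup n ℂ)
    (hX : X.IsHermitian) : (F * X).trace.re ≤ traceNorm X := by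
  set U : Matrix n n ℂ := (hX.eigenvectorUnitary : Matrix n n ℂ)
  set W : Matrix n n ℂ := star U * F * U
  have hW : W ∈ Matrix.unitaryGroup n ℂ :=
    mul_mem (mul_mem (Unitary.star_mem hX.eigenvectorUnitary.2) hF) hX.eigenvectorUnitary.2
  have htrace : (F * X).trace = ∑ i, W i i * hX.eigenvalues i := by
    conv_lhs => rw [hX.spectral_theorem, Unitary.conjStarAlgAut_apply]
    rw [← mul_assoc, ← mul_assoc, Matrix.trace_mul_cycle, ← mul_assoc]
    simp [Matrix.trace, Matrix.mul_diagonal, W, U]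
  rw [traceNorm_eq_sum_abs_eigenvalues hX, htrace, Complex.re_sum]
  refine Finset.sum_le_sum fun i _ => ?_
  calc (W i i * hX.eigenvalues i).re ≤ ‖W i i * hX.eigenvalues i‖ := Complex.re_le_norm _
    _ = ‖W i i‖ * |hX.eigenvalues i| := by rw [norm_mul, Complex.norm_real, Real.norm_eq_abs]
    _ ≤ 1 * |hX.eigenvalues i| := by gcongr; exact entry_norm_bound_of_unitary hW i i
    _ = |hX.eigenvalues i| := one_mul _

end Hermitian

theorem permMatrix_mem_unitaryGroup {n : Type} [Fintype n] [DecidableEq n] (e : Equiv.Perm n) :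
    e.permMatrix ℂ ∈ Matrix.unitaryGroup n ℂ := by
  rw [Matrix.mem_unitaryGroup_iff, Matrix.star_eq_conjTranspose, Matrix.conjTranspose_permMatrix,
    ← Matrix.permMatrix_mul, inv_mul_cancel, Matrix.permMatrix_one]

theorem ptrans_isHermitian {a b : Type} {σ : Matrix (a × b) (a × b) ℂ} (hσ : σ.IsHermitian) :
    (ptrans σ).IsHermitian := by
  ext p q
  exact congrFun (congrFun hσ.eq (p.1, q.2)) (q.1, p.2)

theorem trace_maxEnt_mul {d : ℕ} (σ : Matrix (Fin d × Fin d) (Fin d × Fin d) ℂ) :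
    (maxEnt d * σ).trace =
      (d : ℂ)⁻¹ * (Equiv.Perm.permMatrix ℂ (Equiv.prodComm (Fin d) (Fin d)) * ptrans σ).trace := by
  simp [Matrix.trace, Matrix.mul_apply, maxEnt, ptrans, PEquiv.toMatrix_apply,
    Fintype.sum_prod_type, ite_and, Finset.mul_sum]

/-- Overlap bound for `PPT'` operators with the maximally entangled
state: for every `σ ∈ PPT'` on `H_Â ⊗ H_B̂` with `dim H_Â = dim H_B̂ = d`,
`Tr[Φ^d σ] ≤ 1/d`. -/
theorem maxEnt_overlap_bound {d : ℕ}
    (σ : Matrix (Fin d × Fin d) (Fin d × Fin d) ℂ) (hσ : PPTprime σ) :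
    ((maxEnt d * σ).trace).re ≤ (d : ℝ)⁻¹ := by
  have hswap :
      (Equiv.Perm.permMatrix ℂ (Equiv.prodComm (Fin d) (Fin d)) * ptrans σ).trace.re ≤ 1 :=
    (re_trace_mul_le_traceNorm (permMatrix_mem_unitaryGroup _)
      (ptrans_isHermitian hσ.1.isHermitian)).trans hσ.2
  rw [trace_maxEnt_mul, ← Complex.ofReal_natCast, ← Complex.ofReal_inv, Complex.re_ofReal_mul]
  simpa using mul_le_mul_of_nonneg_left hswap (inv_nonneg.mpr (Nat.cast_nonneg d))

end RainsPaper
end
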